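/- For a Kelvin–Planck theory with set of hotness levels H, the hotter-than relation ≻ is a strict partial order on H: it is irreflexive, antisymmetric, and transitive. -/

import Mathlib

open Set

noncomputable section

/-- Signed regular Borel measures on `X`, modeled via the Riesz representation
theorem as the weak-star dual of `C(X, ℝ)`. -/
abbrev Meas (X : Type*) [TopologicalSpace X] := WeakDual ℝ C(X, ℝ)

/-- The ambient space containing `V(X) = M°(X) ⊕ M(X)`; membership in the
subspace `M°(X)` of the first component is expressed by `p.1 1 = 0`. -/
abbrev VSp (X : Type*) [TopologicalSpace X] := Meas X × Meas X

/-- The cone of nonnegative measures. -/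
def PosMeas (X : Type*) [TopologicalSpace X] : Set (Meas X) :=
  {μ | ∀ f : C(X, ℝ), (∀ x, 0 ≤ f x) → 0 ≤ μ f}

variable {X : Type*} [TopologicalSpace X]

/-- The Dirac measure at a point, i.e. the evaluation functional. -/
def dirac (x : X) : Meas X :=
  (⟨⟨⟨fun f => f x, fun _ _ => rfl⟩, fun _ _ => rfl⟩,
    continuous_eval_const x⟩ : C(X, ℝ) →L[ℝ] ℝ)

/-- The set of nonnegative multiples of members of `P`. -/
def coneOf (P : Set (VSp X)) : Set (VSp X) :=
  {x | ∃ c : ℝ, 0 ≤ c ∧ ∃ p ∈ P, x = c • p}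

/-- `\hat P`, the weak-star closure of the cone generated by `P`. -/
def hatP (P : Set (VSp X)) : Set (VSp X) :=
  closure (coneOf P)

/-- A thermodynamical theory: processes have change of condition with total mass
zero (i.e. `P ⊆ V(X)`), and `\hat P` is convex. -/
def IsThermoTheory (P : Set (VSp X)) : Prop :=
  (∀ p ∈ P, p.1 (1 : C(X, ℝ)) = 0) ∧ Convex ℝ (hatP P)

/-- A Kelvin–Planck theory: a thermodynamical theory with
`\hat P ∩ ({0} × M₊(X)) = {(0,0)}`. -/
def IsKelvinPlanck (P : Set (VSp X)) : Prop :=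
  IsThermoTheory P ∧ hatP P ∩ (({0} : Set (Meas X)) ×ˢ PosMeas X) = {(0, 0)}

/-- A Clausius–Duhem pair `(η, T)` for the theory `P`: `η` and `T` are continuous,
`T` is strictly positive, and for every continuous `β` equal pointwise to `1/T`
(such a `β` exists, and is unique, by positivity of `T`), the Clausius–Duhem
inequality `∫ η d(Δm) ≥ ∫ (1/T) dq` holds for every process in `P`. -/
def IsCDPair (P : Set (VSp X)) (η T : C(X, ℝ)) : Prop :=
  (∀ x, 0 < T x) ∧
    ∀ β : C(X, ℝ), (∀ x, β x = (T x)⁻¹) → ∀ p ∈ P, p.2 β ≤ p.1 η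

/-- A Clausius–Duhem temperature scale. -/
def IsCDTemp (P : Set (VSp X)) (T : C(X, ℝ)) : Prop :=
  ∃ η : C(X, ℝ), IsCDPair P η T

/-- Two states are of the same hotness: both `(0, δ_a − δ_b)` and `(0, δ_b − δ_a)`
belong to `\hat P`. -/
def SameHotness (P : Set (VSp X)) (a b : X) : Prop :=
  ((0 : Meas X), dirac a - dirac b) ∈ hatP P ∧
    ((0 : Meas X), dirac b - dirac a) ∈ hatP P

/-- The hotness level of a state. -/
def hotnessLevel (P : Set (VSp X)) (a : X) : Set X :=
  {b | SameHotness P a b}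

/-- A subset of the state space that is a hotness level. -/
def IsHotnessLevel (P : Set (VSp X)) (h : Set X) : Prop :=
  ∃ a : X, h = hotnessLevel P a

/-- The (signed) measure `μ` is supported in the set `A`: `μ` annihilates every
continuous function vanishing on `A`. -/
def SuppIn (μ : Meas X) (A : Set X) : Prop :=
  ∀ f : C(X, ℝ), (∀ x ∈ A, f x = 0) → μ f = 0

/-- `\hat Q` contains a passive heat transfer from hotness level `h` to `h'`:
an element `(0, μ − μ')` of `\hat Q` with `μ, μ'` nonnegative, `supp μ ⊆ h`,
`supp μ' ⊆ h'` and `μ(h) = μ'(h') > 0` (the common value being the total mass). -/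
def IsPassiveHT (Q : Set (VSp X)) (h h' : Set X) : Prop :=
  ∃ μ μ' : Meas X, μ ∈ PosMeas X ∧ μ' ∈ PosMeas X ∧ SuppIn μ h ∧ SuppIn μ' h' ∧
    μ (1 : C(X, ℝ)) = μ' (1 : C(X, ℝ)) ∧ 0 < μ (1 : C(X, ℝ)) ∧
    ((0 : Meas X), μ - μ') ∈ hatP Q

/-- Hotness level `h'` is hotter than `h`: the levels are distinct and every
thermodynamical theory whose closed process cone contains `P` together with a
passive heat transfer from `h` to `h'` fails to be a Kelvin–Planck theory. -/
def Hotter (P : Set (VSp X)) (h' h : Set X) : Prop :=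
  h' ≠ h ∧ ∀ Pd : Set (VSp X), IsThermoTheory Pd → P ⊆ hatP Pd →
    IsPassiveHT Pd h h' → ¬ IsKelvinPlanck Pd

/-- State `a` is hotter than state `b`. -/
def HotterState (P : Set (VSp X)) (a b : X) : Prop :=
  Hotter P (hotnessLevel P a) (hotnessLevel P b)

/-- A Carnot element of the theory `P` operating between hotness levels `h'` and
`h`: a reversible cyclic element `(0, μ' − μ)` with `μ', μ` nonzero nonnegative
measures supported in `h'`, `h` respectively. -/
def IsCarnotBetween (P : Set (VSp X)) (h' h : Set X) (p : VSp X) : Prop :=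
  p ∈ hatP P ∧ -p ∈ hatP P ∧
    ∃ μ' μ : Meas X, μ' ∈ PosMeas X ∧ μ ∈ PosMeas X ∧ μ' ≠ 0 ∧ μ ≠ 0 ∧
      SuppIn μ' h' ∧ SuppIn μ h ∧ p = ((0 : Meas X), μ' - μ)

end

/-!
If `h₁ ≻ h₂ ≻ h₃` and a Kelvin–Planck theory `Q` with `P ⊆ \hat Q` contained a passive heat
transfer from `h₃` to `h₁`, Hahn–Banach separation of the closed cone `\hat Q` from the
weak-star compact set `{0} × {ν ≥ 0, ν(Σ) = 1}` would give a functional `g` that is `≤ 0` on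
`\hat Q` and `> 0` on every nonzero `(0, ν)` with `ν ≥ 0`. Such a `g` is positive on every heat
transfer `w` from a level `h` to a hotter level `h'`: if `g w ≤ 0`, then `g` also certifies that
the cone spanned by `Q` and `w` is Kelvin–Planck, contradicting `h' ≻ h`. Routing the transfer
from `h₃` to `h₁` through a point of `h₂` splits it into two such transfers, so `g` is positive
on it although it lies in `\hat Q`. Antisymmetry is the case `h₃ = h₁`, where the zero transfer
lies in `\hat P`.
-/

lemma nonpos_of_mem_hull {E : Type*} [AddCommGroup E] [Module ℝ E] {φ : E →ₗ[ℝ] ℝ} {S : Set E}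
    (hS : ∀ x ∈ S, φ x ≤ 0) {x : E} (hx : x ∈ PointedCone.hull ℝ S) : φ x ≤ 0 := by
  induction hx using Submodule.span_induction with
  | mem x hx => exact hS x hx
  | zero => simp
  | add x y _ _ hx hy => rw [map_add]; linarith
  | smul c x _ hx =>
    rw [Nonneg.mk_smul, map_smul, smul_eq_mul]
    exact mul_nonpos_of_nonneg_of_nonpos c.2 hx

section Thermo

variable {X : Type*} [TopologicalSpace X]

-- `WeakDual` is not reducible to `WeakBilin`, so this instance is not found automatically.
instance : LocallyConvexSpace ℝ (Meas X) := WeakBilin.locallyConvexSpace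

section HatP

variable {P : Set (VSp X)}

lemma subset_hatP : P ⊆ hatP P :=
  fun p hp => subset_closure ⟨1, zero_le_one, p, hp, (one_smul ℝ p).symm⟩

lemma smul_mem_hatP {c : ℝ} (hc : 0 ≤ c) {x : VSp X} (hx : x ∈ hatP P) : c • x ∈ hatP P := by
  have hcone : (c • ·) '' coneOf P ⊆ coneOf P := by
    rintro _ ⟨_, ⟨d, hd, p, hp, rfl⟩, rfl⟩
    exact ⟨c * d, mul_nonneg hc hd, p, hp, smul_smul c d p⟩
  exact closure_mono hcone
    (image_closure_subset_closure_image (continuous_const_smul c) ⟨x, hx, rfl⟩)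

lemma hatP_pointedCone (K : PointedCone ℝ (VSp X)) : hatP (K : Set (VSp X)) = closure K := by
  refine congrArg closure (Subset.antisymm ?_ fun p hp => ?_)
  · rintro _ ⟨c, hc, p, hp, rfl⟩
    exact K.smul_mem hc hp
  · exact ⟨1, zero_le_one, p, hp, (one_smul ℝ p).symm⟩

lemma hatP_subset_hatP_pointedCone {K : PointedCone ℝ (VSp X)} (hPK : P ⊆ K) :
    hatP P ⊆ hatP (K : Set (VSp X)) := by
  rw [hatP_pointedCone]
  refine closure_mono ?_
  rintro _ ⟨c, hc, p, hp, rfl⟩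
  exact K.smul_mem hc (hPK hp)

lemma nonpos_of_mem_hatP {g : VSp X →L[ℝ] ℝ} (hg : ∀ p ∈ P, g p ≤ 0) {p : VSp X}
    (hp : p ∈ hatP P) : g p ≤ 0 := by
  refine closure_minimal ?_ (isClosed_le g.continuous continuous_const) hp
  rintro _ ⟨c, hc, p, hp, rfl⟩
  simpa using mul_nonpos_of_nonneg_of_nonpos hc (hg p hp)

lemma IsKelvinPlanck.zero_mem_hatP (hP : IsKelvinPlanck P) : (0 : VSp X) ∈ hatP P := by
  have h00 : (0 : VSp X) ∈ hatP P ∩ (({0} : Set (Meas X)) ×ˢ PosMeas X) := hP.2 ▸ rfl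
  exact h00.1

lemma exists_properCone_coe_eq_hatP (hconv : Convex ℝ (hatP P)) (h0 : (0 : VSp X) ∈ hatP P) :
    ∃ C : ProperCone ℝ (VSp X), (C : Set (VSp X)) = hatP P :=
  ⟨{ carrier := hatP P
     add_mem' := fun {x y} hx hy => by
       have hmid := hconv hx hy (by norm_num : (0 : ℝ) ≤ 1 / 2) (by norm_num : (0 : ℝ) ≤ 1 / 2)
         (by norm_num)
       convert smul_mem_hatP (by norm_num : (0 : ℝ) ≤ 2) hmid using 1
       module
     zero_mem' := h0
     smul_mem' := fun c _ hx => smul_mem_hatP c.2 hx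
     isClosed' := isClosed_closure }, rfl⟩

lemma IsThermoTheory.hull_insert (hP : IsThermoTheory P) (ν : Meas X) :
    IsThermoTheory (PointedCone.hull ℝ (insert ((0 : Meas X), ν) P) : Set (VSp X)) := by
  let mass : VSp X →ₗ[ℝ] ℝ :=
    { toFun := fun p => p.1 1, map_add' := fun _ _ => rfl, map_smul' := fun _ _ => rfl }
  have hker : insert ((0 : Meas X), ν) P ⊆ LinearMap.ker mass :=
    insert_subset rfl fun p hp => hP.1 p hp
  refine ⟨fun p hp => Submodule.span_le.2 hker (PointedCone.hull_le_span ℝ _ hp), ?_⟩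
  rw [hatP_pointedCone]
  exact (PointedCone.convex _).closure

end HatP

section PosMeas

lemma isClosed_posMeas : IsClosed (PosMeas X) := by
  have hPos : PosMeas X = ⋂ f ∈ {f : C(X, ℝ) | ∀ x, 0 ≤ f x}, {μ : Meas X | 0 ≤ μ f} := by
    ext μ
    simp [PosMeas]
  rw [hPos]
  exact isClosed_biInter fun f _ => isClosed_le continuous_const (WeakDual.eval_continuous f)

lemma convex_posMeas : Convex ℝ (PosMeas X) := by
  intro μ hμ ν hν a b ha hb _ f hf
  exact add_nonneg (mul_nonneg ha (hμ f hf)) (mul_nonneg hb (hν f hf))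

lemma smul_mem_posMeas {c : ℝ} (hc : 0 ≤ c) {ν : Meas X} (hν : ν ∈ PosMeas X) :
    c • ν ∈ PosMeas X :=
  fun f hf => mul_nonneg hc (hν f hf)

variable [CompactSpace X] {ν : Meas X}

lemma abs_apply_le_of_mem_posMeas (hν : ν ∈ PosMeas X) (f : C(X, ℝ)) :
    |ν f| ≤ ν 1 * ‖f‖ := by
  have hf : ∀ x, |f x| ≤ ‖f‖ := fun x => by simpa using f.norm_coe_le_norm x
  have hsub : 0 ≤ ν (‖f‖ • 1 - f) := hν _ fun x => by
    simpa using (le_abs_self (f x)).trans (hf x)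
  have hadd : 0 ≤ ν (‖f‖ • 1 + f) := hν _ fun x => by
    simpa [neg_le_iff_add_nonneg] using (neg_le_abs (f x)).trans (hf x)
  rw [map_sub, map_smul, smul_eq_mul] at hsub
  rw [map_add, map_smul, smul_eq_mul] at hadd
  rw [abs_le]
  constructor <;> nlinarith

lemma eq_zero_of_mem_posMeas_of_apply_one (hν : ν ∈ PosMeas X) (h1 : ν 1 = 0) : ν = 0 :=
  DFunLike.ext _ _ fun f =>
    abs_nonpos_iff.mp (by simpa [h1] using abs_apply_le_of_mem_posMeas hν f)

lemma isCompact_posMeas_inter_apply_one_eq_one :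
    IsCompact (PosMeas X ∩ {ν : Meas X | ν 1 = 1}) := by
  refine (WeakDual.isCompact_closedBall (𝕜 := ℝ) (E := C(X, ℝ)) 0 1).of_isClosed_subset
    (isClosed_posMeas.inter (isClosed_eq (WeakDual.eval_continuous _) continuous_const)) ?_
  rintro ν ⟨hν, h1⟩
  simp only [mem_preimage, Metric.mem_closedBall, dist_zero_right]
  refine ContinuousLinearMap.opNorm_le_bound _ zero_le_one fun f => ?_
  have hbound := abs_apply_le_of_mem_posMeas hν f
  rw [h1] at hbound
  simpa using hbound

end PosMeas

section KelvinPlanckFunctional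

variable {Q : Set (VSp X)} {g : VSp X →L[ℝ] ℝ}

def IsKelvinPlanckFunctional (Q : Set (VSp X)) (g : VSp X →L[ℝ] ℝ) : Prop :=
  (∀ p ∈ Q, g p ≤ 0) ∧ ∀ ν ∈ PosMeas X, ν ≠ 0 → 0 < g (0, ν)

lemma IsKelvinPlanckFunctional.isKelvinPlanck (hg : IsKelvinPlanckFunctional Q g)
    (hQ : IsThermoTheory Q) (h0 : (0 : VSp X) ∈ hatP Q) : IsKelvinPlanck Q := by
  refine ⟨hQ, Subset.antisymm ?_ ?_⟩
  · rintro ⟨ρ, ν⟩ ⟨hp, hρ, hν⟩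
    obtain rfl : ρ = 0 := hρ
    obtain rfl : ν = 0 := by
      by_contra hne
      exact (nonpos_of_mem_hatP hg.1 hp).not_gt (hg.2 ν hν hne)
    rfl
  · rintro _ rfl
    exact ⟨h0, rfl, fun f _ => le_rfl⟩

theorem IsKelvinPlanck.exists_isKelvinPlanckFunctional [CompactSpace X]
    (hQ : IsKelvinPlanck Q) : ∃ g, IsKelvinPlanckFunctional Q g := by
  obtain ⟨C, hC⟩ := exists_properCone_coe_eq_hatP hQ.1.2 hQ.zero_mem_hatP
  set K : Set (VSp X) := ({0} : Set (Meas X)) ×ˢ (PosMeas X ∩ {ν | ν 1 = 1})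
  have hKconv : Convex ℝ K := (convex_singleton 0).prod (convex_posMeas.inter
    (convex_hyperplane (f := fun ν : Meas X => ν 1) ⟨fun _ _ => rfl, fun _ _ => rfl⟩ 1))
  have hKcomp : IsCompact K := isCompact_singleton.prod isCompact_posMeas_inter_apply_one_eq_one
  have hdisj : Disjoint K C := by
    rw [hC, disjoint_left]
    rintro ⟨ρ, ν⟩ ⟨hρ, hν, h1⟩ hp
    have h00 : (ρ, ν) ∈ ({(0, 0)} : Set (VSp X)) := hQ.2 ▸ ⟨hp, hρ, hν⟩
    simp only [mem_singleton_iff, Prod.mk.injEq] at h00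
    rw [h00.2] at h1
    exact zero_ne_one h1
  obtain ⟨f, hfC, hfK⟩ := C.hyperplane_separation hKconv hKcomp hdisj
  refine ⟨-f, fun p hp => ?_, fun ν hν hne => ?_⟩
  · have hpC : p ∈ (C : Set (VSp X)) := hC ▸ subset_hatP hp
    simpa using hfC p hpC
  have hν1 : 0 < ν 1 := (hν 1 fun _ => zero_le_one).lt_of_ne'
    fun h => hne (eq_zero_of_mem_posMeas_of_apply_one hν h)
  have hK : ((0 : Meas X), (ν 1)⁻¹ • ν) ∈ K :=
    ⟨rfl, smul_mem_posMeas (inv_nonneg.2 hν1.le) hν, inv_mul_cancel₀ hν1.ne'⟩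
  have hscale : ((0 : Meas X), ν) = ν 1 • ((0 : Meas X), (ν 1)⁻¹ • ν) := by
    simp [smul_smul, hν1.ne']
  rw [hscale, map_smul, smul_eq_mul]
  exact mul_pos hν1 (by simpa using hfK _ hK)

end KelvinPlanckFunctional

section HeatTransfer

variable {P Q : Set (VSp X)} {h h' h'' : Set X} {μ μ' : Meas X}

def IsHeatTransfer (h h' : Set X) (μ μ' : Meas X) : Prop :=
  μ ∈ PosMeas X ∧ μ' ∈ PosMeas X ∧ SuppIn μ h ∧ SuppIn μ' h' ∧ μ 1 = μ' 1 ∧ 0 < μ 1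

lemma isPassiveHT_iff : IsPassiveHT Q h h' ↔
    ∃ μ μ', IsHeatTransfer h h' μ μ' ∧ ((0 : Meas X), μ - μ') ∈ hatP Q := by
  simp only [IsPassiveHT, IsHeatTransfer, and_assoc]

lemma isHeatTransfer_dirac {a : X} (ha : a ∈ h) : IsHeatTransfer h h (dirac a) (dirac a) :=
  ⟨fun _ hf => hf a, fun _ hf => hf a, fun _ hf => hf a ha, fun _ hf => hf a ha, rfl, one_pos⟩

lemma IsHeatTransfer.through (ht : IsHeatTransfer h h' μ μ') {b : X} (hb : b ∈ h'') :
    IsHeatTransfer h h'' μ (μ 1 • dirac b) ∧ IsHeatTransfer h'' h' (μ 1 • dirac b) μ' := by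
  obtain ⟨hμ, hμ', hs, hs', hm, hpos⟩ := ht
  have hd : μ 1 • dirac b ∈ PosMeas X := smul_mem_posMeas hpos.le fun _ hf => hf b
  have hds : SuppIn (μ 1 • dirac b) h'' := fun f hf =>
    show μ 1 * f b = 0 by rw [hf b hb, mul_zero]
  have hd1 : (μ 1 • dirac b) 1 = μ 1 := mul_one _
  exact ⟨⟨hμ, hd, hs, hds, hd1.symm, hpos⟩, ⟨hd, hμ', hds, hs', hd1.trans hm, hd1.symm ▸ hpos⟩⟩

lemma isPassiveHT_self (h0 : (0 : VSp X) ∈ hatP Q) {a : X} (ha : a ∈ h) : IsPassiveHT Q h h :=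
  isPassiveHT_iff.2 ⟨_, _, isHeatTransfer_dirac ha, by rw [sub_self]; exact h0⟩

lemma mem_hotnessLevel_self (h0 : (0 : VSp X) ∈ hatP P) (a : X) : a ∈ hotnessLevel P a :=
  ⟨by rw [sub_self]; exact h0, by rw [sub_self]; exact h0⟩

lemma IsHotnessLevel.nonempty (h0 : (0 : VSp X) ∈ hatP P) (hh : IsHotnessLevel P h) :
    h.Nonempty := by
  obtain ⟨a, rfl⟩ := hh
  exact ⟨a, mem_hotnessLevel_self h0 a⟩

theorem Hotter.pos_of_isHeatTransfer {g : VSp X →L[ℝ] ℝ} (hot : Hotter P h' h)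
    (hQ : IsThermoTheory Q) (hPQ : P ⊆ hatP Q) (hg : IsKelvinPlanckFunctional Q g)
    (ht : IsHeatTransfer h h' μ μ') : 0 < g ((0 : Meas X), μ - μ') := by
  by_contra! hle
  set w : VSp X := ((0 : Meas X), μ - μ')
  set A : PointedCone ℝ (VSp X) := PointedCone.hull ℝ (insert w Q)
  have hwA : w ∈ A := PointedCone.subset_hull (mem_insert w Q)
  have hgA : IsKelvinPlanckFunctional (A : Set (VSp X)) g :=
    ⟨fun _ hp => nonpos_of_mem_hull (φ := g.toLinearMap) (forall_mem_insert.2 ⟨hle, hg.1⟩) hp,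
      hg.2⟩
  have hQA : hatP Q ⊆ hatP (A : Set (VSp X)) :=
    hatP_subset_hatP_pointedCone (PointedCone.subset_hull.trans' (subset_insert w Q))
  exact hot.2 A (hQ.hull_insert _) (hPQ.trans hQA)
    (isPassiveHT_iff.2 ⟨μ, μ', ht, subset_hatP hwA⟩)
    (hgA.isKelvinPlanck (hQ.hull_insert _) (subset_hatP A.zero_mem))

theorem not_isKelvinPlanck_of_hotter_of_hotter [CompactSpace X] {h₁ h₂ h₃ : Set X}
    (H₁₂ : Hotter P h₁ h₂) (H₂₃ : Hotter P h₂ h₃) (hh₂ : h₂.Nonempty)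
    (hQ : IsThermoTheory Q) (hPQ : P ⊆ hatP Q) (hHT : IsPassiveHT Q h₃ h₁) :
    ¬ IsKelvinPlanck Q := by
  intro hKP
  obtain ⟨g, hg⟩ := hKP.exists_isKelvinPlanckFunctional
  obtain ⟨μ₃, μ₁, ht, hmem⟩ := isPassiveHT_iff.1 hHT
  obtain ⟨b, hb⟩ := hh₂
  obtain ⟨ht₃₂, ht₂₁⟩ := ht.through hb
  have h₃₂ := H₂₃.pos_of_isHeatTransfer hQ hPQ hg ht₃₂
  have h₂₁ := H₁₂.pos_of_isHeatTransfer hQ hPQ hg ht₂₁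
  have h₃₁ := nonpos_of_mem_hatP hg.1 hmem
  set ν := μ₃ 1 • dirac b
  have hsplit : ((0 : Meas X), μ₃ - μ₁) = ((0 : Meas X), μ₃ - ν) + ((0 : Meas X), ν - μ₁) := by
    simp
  rw [hsplit, map_add] at h₃₁
  linarith

end HeatTransfer

end Thermo

theorem hotter_strict_partial_order_general
    {X : Type*} [TopologicalSpace X] [CompactSpace X]
    (P : Set (VSp X)) (hP : IsKelvinPlanck P) :
    (∀ h : Set X, IsHotnessLevel P h → ¬ Hotter P h h) ∧
    (∀ h h' : Set X, IsHotnessLevel P h → IsHotnessLevel P h' →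
      Hotter P h' h → ¬ Hotter P h h') ∧
    (∀ h₁ h₂ h₃ : Set X, IsHotnessLevel P h₁ → IsHotnessLevel P h₂ →
      IsHotnessLevel P h₃ → Hotter P h₁ h₂ → Hotter P h₂ h₃ → Hotter P h₁ h₃) := by
  have h0 := hP.zero_mem_hatP
  have hasymm : ∀ h h' : Set X, IsHotnessLevel P h → IsHotnessLevel P h' →
      Hotter P h' h → ¬ Hotter P h h' := by
    intro h h' hh hh' H'h Hh'
    obtain ⟨a, ha⟩ := hh'.nonempty h0
    exact not_isKelvinPlanck_of_hotter_of_hotter H'h Hh' (hh.nonempty h0) hP.1 subset_hatP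
      (isPassiveHT_self h0 ha) hP
  refine ⟨fun h _ H => H.1 rfl, hasymm, fun h₁ h₂ h₃ hh₁ hh₂ _ H₁₂ H₂₃ => ⟨?_, ?_⟩⟩
  · intro heq
    exact hasymm h₂ h₁ hh₂ hh₁ H₁₂ (heq ▸ H₂₃)
  · exact fun Q hQ hPQ => not_isKelvinPlanck_of_hotter_of_hotter H₁₂ H₂₃ (hh₂.nonempty h0) hQ hPQ

/-- **Corollary.** For a Kelvin–Planck theory, the hotter-than relation `≻` is a
strict partial order on the set of hotness levels: it is irreflexive, antisymmetric
and transitive. -/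
theorem hotter_strict_partial_order
    {X : Type*} [TopologicalSpace X] [CompactSpace X] [T2Space X]
    (P : Set (VSp X)) (hP : IsKelvinPlanck P) :
    (∀ h : Set X, IsHotnessLevel P h → ¬ Hotter P h h) ∧
    (∀ h h' : Set X, IsHotnessLevel P h → IsHotnessLevel P h' →
      Hotter P h' h → ¬ Hotter P h h') ∧
    (∀ h₁ h₂ h₃ : Set X, IsHotnessLevel P h₁ → IsHotnessLevel P h₂ →
      IsHotnessLevel P h₃ → Hotter P h₁ h₂ → Hotter P h₂ h₃ → Hotter P h₁ h₃) :=
  hotter_strict_partial_order_general P hP
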